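/- Fix natural numbers g and p, let K = ℚ(t,u,v), and let σ be the ℚ-algebra automorphism of K fixing u and v and sending t ↦ 1/(tuv). Suppose H̃_n ∈ K (n ≥ 1) satisfy Σ_λ ℋ^{(p)}_λ(t,u,v) T^{|λ|} = Exp( Σ_{n≥1} (t/((1−t)(1−tuv))) · H̃_n · T^n ) in K[[T]], the left sum running over all partitions λ. Then σ(H̃_n) = H̃_n for every n ≥ 1. (Lemma: the normalized series H̃_n^{(p)} satisfy H̃_n^{(p)}(1/(t𝕃)) = H̃_n^{(p)}(t).) -/

import Mathlib

/-- The arm length `a(x) = λ_i − j` of a box of a Young diagram (0-indexed cells). -/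
def YoungDiagram.armLen (μ : YoungDiagram) (c : ℕ × ℕ) : ℕ :=
  μ.rowLen c.1 - (c.2 + 1)

/-- The leg length `l(x) = λ'_j − i` of a box of a Young diagram (0-indexed cells). -/
def YoungDiagram.legLen (μ : YoungDiagram) (c : ℕ × ℕ) : ℕ :=
  μ.colLen c.2 - (c.1 + 1)

/-- The hook length `h(x) = a(x) + l(x) + 1` of a box of a Young diagram. -/
def YoungDiagram.hookLen (μ : YoungDiagram) (c : ℕ × ℕ) : ℕ :=
  μ.armLen c + μ.legLen c + 1

/-- The rational function field `K = ℚ(t,u,v)`. -/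
noncomputable abbrev K3 : Type := FractionRing (MvPolynomial (Fin 3) ℚ)

/-- The variable `t` of `ℚ(t,u,v)`. -/
noncomputable def tK : K3 := algebraMap (MvPolynomial (Fin 3) ℚ) K3 (MvPolynomial.X 0)

/-- The variable `u` of `ℚ(t,u,v)`. -/
noncomputable def uK : K3 := algebraMap (MvPolynomial (Fin 3) ℚ) K3 (MvPolynomial.X 1)

/-- The variable `v` of `ℚ(t,u,v)`. -/
noncomputable def vK : K3 := algebraMap (MvPolynomial (Fin 3) ℚ) K3 (MvPolynomial.X 2)

/-- `Z(s) = (1−su)^g (1−sv)^g / ((1−suv)(1−s))`, as a function of `s ∈ ℚ(t,u,v)`. -/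
noncomputable def Zg (g : ℕ) (s : K3) : K3 :=
  (1 - s * uK) ^ g * (1 - s * vK) ^ g / ((1 - s * uK * vK) * (1 - s))

/-- `ℋ^{(p)}_λ(t,u,v) = ∏_{x∈d(λ)} (−t^{a(x)−l(x)} (uv)^{a(x)})^p · t^{(1−g)(2l(x)+1)}
  · Z(t^{h(x)} (uv)^{a(x)})` in `ℚ(t,u,v)`. -/
noncomputable def Hp (g p : ℕ) (μ : YoungDiagram) : K3 :=
  ∏ x ∈ μ.cells,
    ((-(tK ^ ((μ.armLen x : ℤ) - (μ.legLen x : ℤ)) * (uK * vK) ^ μ.armLen x)) ^ p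
      * tK ^ (((1 : ℤ) - g) * (2 * (μ.legLen x : ℤ) + 1))
      * Zg g (tK ^ μ.hookLen x * (uK * vK) ^ μ.armLen x))

/-- Given the family of Adams operations `ψ_k : K → K`, this is
`Σ_{k≥1} ψ_k(f)/k`, where each `ψ_k` is extended to `K[[T]]` by `T ↦ T^k`; it is
written coefficientwise: for `f ∈ T·K[[T]]`, the `n`-th coefficient of
`Σ_{k≥1} ψ_k(f)/k` is `Σ_{k ∣ n, k ≥ 1} (1/k)·ψ_k(coeff_{n/k} f)`. -/
noncomputable def psiSum (ψ : ℕ → (K3 →+* K3)) (f : PowerSeries K3) : PowerSeries K3 :=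
  PowerSeries.mk fun n =>
    ∑ k ∈ n.divisors, ((k : K3)⁻¹) * ψ k (PowerSeries.coeff (n / k) f)

/-- The exponential `exp g = Σ_{m≥0} g^m/m!` of a power series `g` with zero constant
term, written coefficientwise (only `m ≤ n` contribute to the `n`-th coefficient). -/
noncomputable def expPS (f : PowerSeries K3) : PowerSeries K3 :=
  PowerSeries.mk fun n =>
    ∑ m ∈ Finset.range (n + 1), ((m.factorial : K3)⁻¹) * PowerSeries.coeff n (f ^ m)

/-- The plethystic exponential `Exp(f) = exp(Σ_{k≥1} ψ_k(f)/k)` for `f ∈ T·K[[T]]`,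
relative to the family of Adams operations `ψ`. -/
noncomputable def pExp (ψ : ℕ → (K3 →+* K3)) (f : PowerSeries K3) : PowerSeries K3 :=
  expPS (psiSum ψ f)

-- ============ auxiliary lemmas ============

lemma algK3_inj : Function.Injective (algebraMap (MvPolynomial (Fin 3) ℚ) K3) :=
  IsFractionRing.injective _ _

lemma tK_ne : tK ≠ 0 := by
  rw [tK, map_ne_zero_iff _ algK3_inj]; exact MvPolynomial.X_ne_zero _

lemma uK_ne : uK ≠ 0 := by
  rw [uK, map_ne_zero_iff _ algK3_inj]; exact MvPolynomial.X_ne_zero _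

lemma vK_ne : vK ≠ 0 := by
  rw [vK, map_ne_zero_iff _ algK3_inj]; exact MvPolynomial.X_ne_zero _

lemma one_sub_mono_ne (i j k : ℕ) (hi : 1 ≤ i) : (1:K3) - tK^i*uK^j*vK^k ≠ 0 := by
  have h1 : tK^i*uK^j*vK^k
      = algebraMap (MvPolynomial (Fin 3) ℚ) K3
        (MvPolynomial.X 0^i * MvPolynomial.X 1^j * MvPolynomial.X 2^k) := by
    simp [tK, uK, vK, map_mul, map_pow]
  rw [h1, show (1:K3) = algebraMap (MvPolynomial (Fin 3) ℚ) K3 1 from (map_one _).symm,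
    ← map_sub, map_ne_zero_iff _ algK3_inj]
  intro h
  have h2 := congrArg MvPolynomial.constantCoeff h
  simp only [map_sub, map_one, map_mul, map_pow, MvPolynomial.constantCoeff_X, map_zero,
    zero_pow (by omega : i ≠ 0), zero_mul, sub_zero] at h2
  exact one_ne_zero h2

lemma ringHom_ext3 {φ₁ φ₂ : K3 →+* K3} (h1 : φ₁ tK = φ₂ tK) (h2 : φ₁ uK = φ₂ uK)
    (h3 : φ₁ vK = φ₂ vK) : φ₁ = φ₂ := by
  apply IsLocalization.ringHom_ext (nonZeroDivisors (MvPolynomial (Fin 3) ℚ))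
  apply MvPolynomial.ringHom_ext
  · intro r
    exact RingHom.congr_fun
      (Subsingleton.elim ((φ₁.comp (algebraMap _ K3)).comp (MvPolynomial.C : ℚ →+* _))
        ((φ₂.comp (algebraMap _ K3)).comp (MvPolynomial.C : ℚ →+* _))) r
  · intro i
    fin_cases i
    · exact h1
    · exact h2
    · exact h3

set_option maxHeartbeats 1000000 in
lemma cell_identity {F : Type*} [Field F] (g p : ℕ) (t u v : F)
    (ht : t ≠ 0) (hu : u ≠ 0) (hv : v ≠ 0) (a l : ℕ)
    (hC : (1:F) - t^(a+l+1)*u^(l+1)*v^(l+1) ≠ 0)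
    (hD : (1:F) - t^(a+l+1)*u^l*v^l ≠ 0) :
    (-((t*u*v)⁻¹ ^ ((a:ℤ) - (l:ℤ)) * (u*v)^a))^p * (t*u*v)⁻¹ ^ (((1:ℤ)-(g:ℤ))*(2*(l:ℤ)+1))
      * ((1 - (t*u*v)⁻¹^(a+l+1)*(u*v)^a * u)^g * (1 - (t*u*v)⁻¹^(a+l+1)*(u*v)^a * v)^g
         / ((1 - (t*u*v)⁻¹^(a+l+1)*(u*v)^a * u * v) * (1 - (t*u*v)⁻¹^(a+l+1)*(u*v)^a)))
    = (-(t ^ ((l:ℤ) - (a:ℤ)) * (u*v)^l))^p * t ^ (((1:ℤ)-(g:ℤ))*(2*(a:ℤ)+1))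
      * ((1 - t^(a+l+1)*(u*v)^l * u)^g * (1 - t^(a+l+1)*(u*v)^l * v)^g
         / ((1 - t^(a+l+1)*(u*v)^l * u * v) * (1 - t^(a+l+1)*(u*v)^l))) := by
  have hw : u*v ≠ 0 := mul_ne_zero hu hv
  have htuv : t*u*v ≠ 0 := mul_ne_zero (mul_ne_zero ht hu) hv
  have hM : ∀ i j k : ℕ, t^i*u^j*v^k ≠ 0 := fun i j k =>
    mul_ne_zero (mul_ne_zero (pow_ne_zero _ ht) (pow_ne_zero _ hu)) (pow_ne_zero _ hv)
  -- p-factor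
  have e1 : (t*u*v)⁻¹ ^ ((a:ℤ) - (l:ℤ)) * (u*v)^a = t ^ ((l:ℤ) - (a:ℤ)) * (u*v)^l := by
    rw [inv_zpow, ← zpow_neg, neg_sub]
    rw [show t*u*v = t*(u*v) by ring, mul_zpow]
    rw [← zpow_natCast (u*v) a, ← zpow_natCast (u*v) l, mul_assoc, ← zpow_add₀ hw]
    have : (l:ℤ) - (a:ℤ) + (a:ℤ) = (l:ℤ) := by ring
    rw [this]
  rw [e1]
  -- t-monomials
  have e2 : (t*u*v)⁻¹ ^ (((1:ℤ)-(g:ℤ))*(2*(l:ℤ)+1)) = (t*u*v)^(g*(2*l+1)) / (t*u*v)^(2*l+1) := by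
    rw [inv_zpow, ← zpow_neg]
    have : -(((1:ℤ)-(g:ℤ))*(2*(l:ℤ)+1)) = ((g*(2*l+1) : ℕ) : ℤ) - ((2*l+1 : ℕ) : ℤ) := by
      push_cast; ring
    rw [this, zpow_sub₀ htuv, zpow_natCast, zpow_natCast]
  have e3 : t ^ (((1:ℤ)-(g:ℤ))*(2*(a:ℤ)+1)) = t^(2*a+1) / t^(g*(2*a+1)) := by
    have : ((1:ℤ)-(g:ℤ))*(2*(a:ℤ)+1) = ((2*a+1 : ℕ) : ℤ) - ((g*(2*a+1) : ℕ) : ℤ) := by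
      push_cast; ring
    rw [this, zpow_sub₀ ht, zpow_natCast, zpow_natCast]
  rw [e2, e3]
  -- Z-factor monomial rewrites
  have key : ∀ X : F, X ≠ 0 → (1:F) - X⁻¹ = -((1-X)/X) := by
    intro X hX; field_simp; ring
  have m1 : (t*u*v)⁻¹^(a+l+1)*(u*v)^a * u = (t^(a+l+1)*u^l*v^(l+1))⁻¹ := by
    apply eq_inv_of_mul_eq_one_left
    rw [inv_pow]
    field_simp
    ring
  have m2 : (t*u*v)⁻¹^(a+l+1)*(u*v)^a * v = (t^(a+l+1)*u^(l+1)*v^l)⁻¹ := by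
    apply eq_inv_of_mul_eq_one_left
    rw [inv_pow]
    field_simp
    ring
  have m3 : (t*u*v)⁻¹^(a+l+1)*(u*v)^a * u * v = (t^(a+l+1)*u^l*v^l)⁻¹ := by
    apply eq_inv_of_mul_eq_one_left
    rw [inv_pow]
    field_simp
    ring
  have m4 : (t*u*v)⁻¹^(a+l+1)*(u*v)^a = (t^(a+l+1)*u^(l+1)*v^(l+1))⁻¹ := by
    apply eq_inv_of_mul_eq_one_left
    rw [inv_pow]
    field_simp
    ring
  rw [m3, m1, m2, m4, key _ (hM _ _ _), key _ (hM _ _ _), key _ (hM _ _ _), key _ (hM _ _ _)]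
  have r3 : t^(a+l+1)*(u*v)^l * u * v = t^(a+l+1)*u^(l+1)*v^(l+1) := by ring
  have r1 : t^(a+l+1)*(u*v)^l * u = t^(a+l+1)*u^(l+1)*v^l := by ring
  have r2 : t^(a+l+1)*(u*v)^l * v = t^(a+l+1)*u^l*v^(l+1) := by ring
  have r4 : t^(a+l+1)*(u*v)^l = t^(a+l+1)*u^l*v^l := by ring
  rw [r3, r1, r2, r4]
  set A := (1:F) - t^(a+l+1)*u^(l+1)*v^l with hAdef
  set B := (1:F) - t^(a+l+1)*u^l*v^(l+1) with hBdef
  set C := (1:F) - t^(a+l+1)*u^(l+1)*v^(l+1) with hCdef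
  set D := (1:F) - t^(a+l+1)*u^l*v^l with hDdef
  clear_value A B C D
  have negg : ∀ x y : F, (-x)^g * (-y)^g = (x*y)^g := by
    intro x y; rw [← mul_pow, neg_mul_neg]
  rw [negg, neg_mul_neg]
  have hPne : (-(t ^ ((l:ℤ) - (a:ℤ)) * (u*v)^l)) ^ p ≠ 0 :=
    pow_ne_zero _ (neg_ne_zero.mpr (mul_ne_zero (zpow_ne_zero _ ht) (pow_ne_zero _ hw)))
  rw [mul_assoc ((-(t ^ ((l:ℤ) - (a:ℤ)) * (u*v)^l))^p),
      mul_assoc ((-(t ^ ((l:ℤ) - (a:ℤ)) * (u*v)^l))^p)]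
  congr 1
  rw [div_mul_div_comm B, div_mul_div_comm D, div_pow, div_div_eq_mul_div,
      div_mul_eq_mul_div ((B*A)^g), div_div,
      div_mul_div_comm ((t*u*v)^(g*(2*l+1))), div_mul_div_comm (t^(2*a+1))]
  rw [div_eq_div_iff
    (mul_ne_zero (pow_ne_zero _ htuv) (mul_ne_zero
      (pow_ne_zero _ (mul_ne_zero (hM _ _ _) (hM _ _ _))) (mul_ne_zero hD hC)))
    (mul_ne_zero (pow_ne_zero _ ht) (mul_ne_zero hC hD))]
  ring

-- transpose lemmas
lemma YoungDiagram.armLen_transpose (μ : YoungDiagram) (c : ℕ × ℕ) :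
    μ.transpose.armLen (Prod.swap c) = μ.legLen c := by
  simp [YoungDiagram.armLen, YoungDiagram.legLen, YoungDiagram.rowLen_transpose]

lemma YoungDiagram.legLen_transpose (μ : YoungDiagram) (c : ℕ × ℕ) :
    μ.transpose.legLen (Prod.swap c) = μ.armLen c := by
  simp [YoungDiagram.armLen, YoungDiagram.legLen, YoungDiagram.colLen_transpose]

lemma YoungDiagram.hookLen_transpose (μ : YoungDiagram) (c : ℕ × ℕ) :
    μ.transpose.hookLen (Prod.swap c) = μ.hookLen c := by
  simp only [YoungDiagram.hookLen, YoungDiagram.armLen_transpose, YoungDiagram.legLen_transpose]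
  omega

lemma YoungDiagram.card_transpose (μ : YoungDiagram) :
    μ.transpose.cells.card = μ.cells.card := by
  simp [YoungDiagram.transpose]

lemma YoungDiagram.transpose_cells (μ : YoungDiagram) :
    μ.transpose.cells = μ.cells.map (Equiv.prodComm ℕ ℕ).toEmbedding := rfl

lemma YoungDiagram.transpose_bijective :
    Function.Bijective (YoungDiagram.transpose) := by
  constructor
  · intro μ ν h
    rw [← YoungDiagram.transpose_transpose μ, h, YoungDiagram.transpose_transpose]
  · intro ν
    exact ⟨ν.transpose, YoungDiagram.transpose_transpose ν⟩

lemma sigma_term (g p : ℕ) (σ : K3 ≃+* K3) (hσu : σ uK = uK) (hσv : σ vK = vK)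
    (hσt : σ tK = 1 / (tK * uK * vK)) (a l : ℕ) :
    σ ((-(tK ^ ((a:ℤ) - (l:ℤ)) * (uK*vK) ^ a))^p * tK ^ (((1:ℤ) - g) * (2*(l:ℤ)+1))
        * Zg g (tK ^ (a+l+1) * (uK*vK)^a))
    = (-(tK ^ ((l:ℤ) - (a:ℤ)) * (uK*vK) ^ l))^p * tK ^ (((1:ℤ) - g) * (2*(a:ℤ)+1))
        * Zg g (tK ^ (a+l+1) * (uK*vK)^l) := by
  have hσt' : σ tK = (tK*uK*vK)⁻¹ := by rw [hσt, one_div]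
  simp only [Zg, map_mul, map_pow, map_neg, map_div₀, map_sub, map_one, map_zpow₀,
    hσu, hσv, hσt']
  exact cell_identity g p tK uK vK tK_ne uK_ne vK_ne a l
    (one_sub_mono_ne _ _ _ (by omega)) (one_sub_mono_ne _ _ _ (by omega))

lemma sigma_Hp (g p : ℕ) (σ : K3 ≃+* K3) (hσu : σ uK = uK) (hσv : σ vK = vK)
    (hσt : σ tK = 1 / (tK * uK * vK)) (μ : YoungDiagram) :
    σ (Hp g p μ) = Hp g p μ.transpose := by
  rw [Hp, Hp, map_prod, YoungDiagram.transpose_cells, Finset.prod_map]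
  apply Finset.prod_congr rfl
  intro c _
  simp only [Equiv.coe_toEmbedding, Equiv.prodComm_apply]
  rw [YoungDiagram.armLen_transpose, YoungDiagram.legLen_transpose,
    YoungDiagram.hookLen_transpose]
  exact sigma_term g p σ hσu hσv hσt (μ.armLen c) (μ.legLen c)

lemma sigma_coeffL (g p n : ℕ) (σ : K3 ≃+* K3) (hσu : σ uK = uK) (hσv : σ vK = vK)
    (hσt : σ tK = 1 / (tK * uK * vK)) :
    σ (∑ᶠ (μ : YoungDiagram) (_ : μ.cells.card = n), Hp g p μ)
      = ∑ᶠ (μ : YoungDiagram) (_ : μ.cells.card = n), Hp g p μ := by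
  calc σ (∑ᶠ (μ : YoungDiagram) (_ : μ.cells.card = n), Hp g p μ)
      = ∑ᶠ (μ : YoungDiagram), σ (∑ᶠ (_ : μ.cells.card = n), Hp g p μ) :=
        σ.toAddEquiv.map_finsum _
    _ = ∑ᶠ (μ : YoungDiagram) (_ : μ.cells.card = n), σ (Hp g p μ) :=
        finsum_congr (fun μ => σ.toAddEquiv.map_finsum _)
    _ = ∑ᶠ (μ : YoungDiagram) (_ : μ.cells.card = n), Hp g p μ.transpose :=
        finsum_congr (fun μ => finsum_congr (fun _ => sigma_Hp g p σ hσu hσv hσt μ))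
    _ = ∑ᶠ (μ : YoungDiagram) (_ : μ.transpose.cells.card = n), Hp g p μ.transpose :=
        finsum_congr (fun μ =>
          finsum_congr_Prop (by rw [YoungDiagram.card_transpose]) (fun _ => rfl))
    _ = ∑ᶠ (μ : YoungDiagram) (_ : μ.cells.card = n), Hp g p μ :=
        finsum_eq_of_bijective YoungDiagram.transpose YoungDiagram.transpose_bijective
          (fun μ => rfl)


lemma map_psiSum (ψ : ℕ → (K3 →+* K3)) (τ : K3 →+* K3)
    (hcomm : ∀ k, 1 ≤ k → ∀ x, τ (ψ k x) = ψ k (τ x)) (f : PowerSeries K3) :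
    PowerSeries.map τ (psiSum ψ f) = psiSum ψ (PowerSeries.map τ f) := by
  ext n
  simp only [PowerSeries.coeff_map, psiSum, PowerSeries.coeff_mk, map_sum, map_mul]
  apply Finset.sum_congr rfl
  intro k hk
  rw [map_inv₀, map_natCast, hcomm k (Nat.pos_of_mem_divisors hk)]

lemma map_expPS (τ : K3 →+* K3) (f : PowerSeries K3) :
    PowerSeries.map τ (expPS f) = expPS (PowerSeries.map τ f) := by
  ext n
  simp only [PowerSeries.coeff_map, expPS, PowerSeries.coeff_mk, map_sum, map_mul]
  apply Finset.sum_congr rfl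
  intro m _
  rw [map_inv₀, map_natCast, ← PowerSeries.coeff_map, map_pow]

lemma map_pExp (ψ : ℕ → (K3 →+* K3)) (τ : K3 →+* K3)
    (hcomm : ∀ k, 1 ≤ k → ∀ x, τ (ψ k x) = ψ k (τ x)) (f : PowerSeries K3) :
    PowerSeries.map τ (pExp ψ f) = pExp ψ (PowerSeries.map τ f) := by
  rw [pExp, pExp, map_expPS, map_psiSum ψ τ hcomm]

lemma pow_coeff_eq (G G' : PowerSeries K3) (n : ℕ)
    (h0 : PowerSeries.coeff 0 G = 0) (h0' : PowerSeries.coeff 0 G' = 0)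
    (hlt : ∀ j, j < n → PowerSeries.coeff j G = PowerSeries.coeff j G') :
    ∀ m j, j ≤ n → (j = n → m ≠ 1) →
      PowerSeries.coeff j (G ^ m) = PowerSeries.coeff j (G' ^ m) := by
  intro m
  induction m with
  | zero => intro j _ _; rfl
  | succ m ih =>
    intro j hj hjn
    by_cases hm : m = 0
    · subst hm
      rw [pow_one, pow_one]
      exact hlt j (by omega)
    · rw [pow_succ', pow_succ', PowerSeries.coeff_mul, PowerSeries.coeff_mul]
      apply Finset.sum_congr rfl
      intro x hx
      rw [Finset.HasAntidiagonal.mem_antidiagonal] at hx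
      by_cases hx1 : x.1 = 0
      · rw [hx1, h0, h0', zero_mul, zero_mul]
      · by_cases hxn : x.1 = n
        · have hx20 : x.2 = 0 := by omega
          have em : ∀ H : PowerSeries K3, PowerSeries.coeff 0 H = 0 →
              PowerSeries.coeff 0 (H ^ m) = 0 := by
            intro H hH
            rw [PowerSeries.coeff_zero_eq_constantCoeff] at hH ⊢
            rw [map_pow, hH, zero_pow hm]
          rw [hx20, em G h0, em G' h0', mul_zero, mul_zero]
        · rw [hlt x.1 (by omega), ih x.2 (by omega) (by omega)]

lemma pExp_inj (ψ : ℕ → (K3 →+* K3)) (hψ1 : ψ 1 = RingHom.id K3)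
    (f f' : PowerSeries K3)
    (h0 : PowerSeries.coeff 0 f = 0) (h0' : PowerSeries.coeff 0 f' = 0)
    (h : pExp ψ f = pExp ψ f') :
    ∀ n, PowerSeries.coeff n f = PowerSeries.coeff n f' := by
  intro n
  induction n using Nat.strong_induction_on with
  | _ n ih =>
    rcases Nat.eq_zero_or_pos n with hn0 | hpos
    · subst hn0; rw [h0, h0']
    · -- facts about G = psiSum ψ f and G' = psiSum ψ f'
      have hG0 : ∀ fh : PowerSeries K3, PowerSeries.coeff 0 (psiSum ψ fh) = 0 := by
        intro fh; simp [psiSum]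
      have hGlt : ∀ j, j < n →
          PowerSeries.coeff j (psiSum ψ f) = PowerSeries.coeff j (psiSum ψ f') := by
        intro j hj
        simp only [psiSum, PowerSeries.coeff_mk]
        refine Finset.sum_congr rfl (fun k hk => ?_)
        rw [ih (j / k) (lt_of_le_of_lt (Nat.div_le_self j k) hj)]
      have hGn : PowerSeries.coeff n (psiSum ψ f) = PowerSeries.coeff n (psiSum ψ f') := by
        have hexp := congrArg (PowerSeries.coeff n) h
        simp only [pExp, expPS, PowerSeries.coeff_mk] at hexp
        have h1mem : (1:ℕ) ∈ Finset.range (n+1) := by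
          simp only [Finset.mem_range]; omega
        rw [← Finset.add_sum_erase _ _ h1mem, ← Finset.add_sum_erase _ _ h1mem] at hexp
        have hrest : ∑ m ∈ (Finset.range (n+1)).erase 1,
              ((m.factorial : K3)⁻¹) * PowerSeries.coeff n (psiSum ψ f ^ m)
            = ∑ m ∈ (Finset.range (n+1)).erase 1,
              ((m.factorial : K3)⁻¹) * PowerSeries.coeff n (psiSum ψ f' ^ m) := by
          refine Finset.sum_congr rfl (fun m hm => ?_)
          rw [pow_coeff_eq (psiSum ψ f) (psiSum ψ f') n (hG0 f) (hG0 f') hGlt m n le_rfl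
            (fun _ => (Finset.mem_erase.mp hm).1)]
        rw [hrest] at hexp
        have h2 := add_right_cancel hexp
        simpa [Nat.factorial_one] using h2
      simp only [psiSum, PowerSeries.coeff_mk] at hGn
      have h1d : (1:ℕ) ∈ n.divisors := Nat.one_mem_divisors.mpr hpos.ne'
      rw [← Finset.add_sum_erase _ _ h1d, ← Finset.add_sum_erase _ _ h1d] at hGn
      have hrest : ∑ k ∈ n.divisors.erase 1,
            ((k : K3)⁻¹) * ψ k (PowerSeries.coeff (n / k) f)
          = ∑ k ∈ n.divisors.erase 1,
            ((k : K3)⁻¹) * ψ k (PowerSeries.coeff (n / k) f') := by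
        refine Finset.sum_congr rfl (fun k hk => ?_)
        obtain ⟨hk1, hkd⟩ := Finset.mem_erase.mp hk
        have hkpos := Nat.pos_of_mem_divisors hkd
        rw [ih (n / k) (Nat.div_lt_self hpos (by omega))]
      rw [hrest] at hGn
      have h2 := add_right_cancel hGn
      simp only [Nat.cast_one, inv_one, one_mul, Nat.div_one, hψ1, RingHom.id_apply] at h2
      exact h2

lemma c_invar {F : Type*} [Field F] (t u v : F) (ht : t ≠ 0) (hu : u ≠ 0) (hv : v ≠ 0)
    (h1 : (1:F) - t ≠ 0) (h2 : (1:F) - t*u*v ≠ 0) :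
    (t*u*v)⁻¹ / ((1 - (t*u*v)⁻¹) * (1 - (t*u*v)⁻¹*u*v)) = t / ((1-t)*(1-t*u*v)) := by
  have htuv : t*u*v ≠ 0 := mul_ne_zero (mul_ne_zero ht hu) hv
  have k1 : (1:F) - (t*u*v)⁻¹ = -((1 - t*u*v)/(t*u*v)) := by field_simp; ring
  have k2 : (1:F) - (t*u*v)⁻¹*u*v = -((1-t)/t) := by
    rw [show (t*u*v)⁻¹*u*v = t⁻¹ by field_simp]
    field_simp; ring
  rw [k1, k2, neg_mul_neg, div_mul_div_comm, div_div_eq_mul_div,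
    div_eq_div_iff (mul_ne_zero h2 h1) (mul_ne_zero h1 h2)]
  field_simp

lemma sigma_c (σ : K3 ≃+* K3) (hσu : σ uK = uK) (hσv : σ vK = vK)
    (hσt : σ tK = 1 / (tK * uK * vK)) :
    σ (tK / ((1 - tK) * (1 - tK*uK*vK))) = tK / ((1 - tK) * (1 - tK*uK*vK)) := by
  have h1K : (1:K3) - tK ≠ 0 := by simpa using one_sub_mono_ne 1 0 0 le_rfl
  have h2K : (1:K3) - tK*uK*vK ≠ 0 := by simpa using one_sub_mono_ne 1 1 1 le_rfl
  have hσt' : σ tK = (tK*uK*vK)⁻¹ := by rw [hσt, one_div]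
  rw [map_div₀, map_mul, map_sub, map_sub, map_one, map_mul, map_mul, hσt', hσu, hσv]
  exact c_invar tK uK vK tK_ne uK_ne vK_ne h1K h2K


/-- Fix `g p : ℕ`, let `K = ℚ(t,u,v)`, and let `σ` be the `ℚ`-algebra
automorphism of `K` fixing `u` and `v` and sending `t ↦ 1/(tuv)`. Suppose `H̃_n ∈ K`
(`n ≥ 1`) satisfy
`Σ_λ ℋ^{(p)}_λ(t,u,v) T^{|λ|} = Exp( Σ_{n≥1} (t/((1−t)(1−tuv))) · H̃_n · T^n )`
in `K[[T]]`, the left sum running over all partitions `λ` (so its `T^n`-coefficient is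
the finite sum `Σ_{|λ|=n} ℋ^{(p)}_λ`). Then `σ(H̃_n) = H̃_n` for every `n ≥ 1`. -/
theorem sigma_fixes_Htilde (g p : ℕ)
    (ψ : ℕ → (K3 →+* K3))
    (hψ : ∀ k, 1 ≤ k → ψ k tK = tK ^ k ∧ ψ k uK = uK ^ k ∧ ψ k vK = vK ^ k)
    (σ : K3 ≃+* K3) (hσu : σ uK = uK) (hσv : σ vK = vK)
    (hσt : σ tK = 1 / (tK * uK * vK))
    (Ht : ℕ → K3)
    (hgen : (PowerSeries.mk fun n => ∑ᶠ (μ : YoungDiagram) (_ : μ.cells.card = n), Hp g p μ)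
        = pExp ψ (PowerSeries.mk fun n =>
            if n = 0 then 0 else tK / ((1 - tK) * (1 - tK * uK * vK)) * Ht n)) :
    ∀ n, 1 ≤ n → σ (Ht n) = Ht n := by
  intro n hn
  have hco : ∀ x : K3, (σ : K3 →+* K3) x = σ x := fun x => rfl
  have h1K : (1:K3) - tK ≠ 0 := by simpa using one_sub_mono_ne 1 0 0 le_rfl
  have h2K : (1:K3) - tK*uK*vK ≠ 0 := by simpa using one_sub_mono_ne 1 1 1 le_rfl
  have hcne : tK / ((1 - tK) * (1 - tK*uK*vK)) ≠ 0 :=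
    div_ne_zero tK_ne (mul_ne_zero h1K h2K)
  have hψ1 : ψ 1 = RingHom.id K3 := by
    obtain ⟨a1, a2, a3⟩ := hψ 1 le_rfl
    apply ringHom_ext3 <;> simp [a1, a2, a3]
  have hcomm : ∀ k, 1 ≤ k → ∀ x, (σ : K3 →+* K3) (ψ k x) = ψ k ((σ : K3 →+* K3) x) := by
    intro k hk
    obtain ⟨a1, a2, a3⟩ := hψ k hk
    have hcc : ((σ : K3 →+* K3).comp (ψ k)) = ((ψ k).comp (σ : K3 →+* K3)) := by
      apply ringHom_ext3
      · show σ (ψ k tK) = ψ k (σ tK)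
        rw [a1, map_pow, hσt]
        rw [map_div₀, map_one, map_mul, map_mul, a1, a2, a3]
        rw [div_pow, one_pow, mul_pow, mul_pow]
      · show σ (ψ k uK) = ψ k (σ uK)
        rw [a2, map_pow, hσu, a2]
      · show σ (ψ k vK) = ψ k (σ vK)
        rw [a3, map_pow, hσv, a3]
    exact fun x => RingHom.congr_fun hcc x
  set L : PowerSeries K3 :=
    (PowerSeries.mk fun n => ∑ᶠ (μ : YoungDiagram) (_ : μ.cells.card = n), Hp g p μ) with hL
  set f : PowerSeries K3 := (PowerSeries.mk fun n =>
    if n = 0 then 0 else tK / ((1 - tK) * (1 - tK * uK * vK)) * Ht n) with hfdef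
  set f' : PowerSeries K3 := (PowerSeries.mk fun n =>
    if n = 0 then 0 else tK / ((1 - tK) * (1 - tK * uK * vK)) * σ (Ht n)) with hf'def
  have hLσ : PowerSeries.map (σ : K3 →+* K3) L = L := by
    ext m
    rw [PowerSeries.coeff_map]
    simp only [hL, PowerSeries.coeff_mk, hco]
    exact sigma_coeffL g p m σ hσu hσv hσt
  have hfσ : PowerSeries.map (σ : K3 →+* K3) f = f' := by
    ext m
    rw [PowerSeries.coeff_map]
    simp only [hfdef, hf'def, PowerSeries.coeff_mk, hco]
    split_ifs with hm
    · exact map_zero _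
    · rw [map_mul, sigma_c σ hσu hσv hσt]
  have hkey : pExp ψ f = pExp ψ f' := by
    calc pExp ψ f = L := hgen.symm
    _ = PowerSeries.map (σ : K3 →+* K3) L := hLσ.symm
    _ = PowerSeries.map (σ : K3 →+* K3) (pExp ψ f) := by rw [hgen]
    _ = pExp ψ (PowerSeries.map (σ : K3 →+* K3) f) := map_pExp ψ _ hcomm f
    _ = pExp ψ f' := by rw [hfσ]
  have h0 : PowerSeries.coeff 0 f = 0 := by simp [hfdef]
  have h0' : PowerSeries.coeff 0 f' = 0 := by simp [hf'def]
  have hfin := pExp_inj ψ hψ1 f f' h0 h0' hkey n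
  simp only [hfdef, hf'def, PowerSeries.coeff_mk, if_neg (by omega : ¬ n = 0)] at hfin
  exact (mul_left_cancel₀ hcne hfin).symm
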